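/- A function on ℂ \ {0} that is harmonic and bounded from above, and which extends subharmonically across 0 and ∞ to the Riemann sphere, must be constant. More precisely: if u is harmonic on ℂ \ {0}, bounded above near 0 and bounded above near ∞, then u is constant. -/

import Mathlib

open Filter Topology

/-- A real-valued function `u` is harmonic on `s ⊆ ℂ` if it is `C²` there and its
Laplacian `∂²u/∂x² + ∂²u/∂y²` vanishes on `s`. -/
def HarmonicOn (u : ℂ → ℝ) (s : Set ℂ) : Prop :=
  ContDiffOn ℝ 2 u s ∧ ∀ z ∈ s,
    iteratedFDeriv ℝ 2 u z ![1, 1] + iteratedFDeriv ℝ 2 u z ![Complex.I, Complex.I] = 0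

open Metric Set

/-- The real dual map `v ↦ Re (w * v)`. -/
noncomputable def dualC (w : ℂ) : ℂ →L[ℝ] ℝ :=
  Complex.reCLM.comp (((ContinuousLinearMap.mul ℂ ℂ) w).restrictScalars ℝ)

lemma dualC_apply (w v : ℂ) : dualC w v = (w * v).re := rfl

lemma dualC_zero : dualC 0 = 0 := by
  ext v; simp [dualC_apply]

lemma dualC_eq_zero {w : ℂ} (h : dualC w = 0) : w = 0 := by
  have h1 : (w * 1).re = 0 := by rw [← dualC_apply, h]; rfl
  have h2 : (w * -Complex.I).re = 0 := by rw [← dualC_apply, h]; rfl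
  apply Complex.ext <;> simp_all [Complex.mul_re]

lemma dualC_add (w₁ w₂ : ℂ) : dualC (w₁ + w₂) = dualC w₁ + dualC w₂ := by
  ext v; simp [dualC_apply, add_mul]

/-- `f` is the "holomorphic gradient field" of `u` on `ℂ \ {0}`:
`f` is holomorphic and `u` has Fréchet derivative `v ↦ Re (f z * v)` everywhere. -/
def HasHoloField (u : ℂ → ℝ) (f : ℂ → ℂ) : Prop :=
  DifferentiableOn ℂ f ({(0:ℂ)}ᶜ) ∧ ∀ z : ℂ, z ≠ 0 → HasFDerivAt u (dualC (f z)) z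

lemma harmonicOn_hasHoloField {u : ℂ → ℝ} (hu : HarmonicOn u ({(0:ℂ)}ᶜ)) :
    ∃ f : ℂ → ℂ, HasHoloField u f := by
  have hop : IsOpen ({(0:ℂ)}ᶜ) := isOpen_compl_singleton
  set g : ℂ → ℂ →L[ℝ] ℝ := fderiv ℝ u with hg
  refine ⟨fun z => (g z 1 : ℝ) - (g z Complex.I : ℝ) * Complex.I, ?_, ?_⟩
  · -- complex differentiability
    intro z hz
    have hz' : z ≠ 0 := hz
    have hca : ContDiffAt ℝ 2 u z := (hu.1.contDiffAt (hop.mem_nhds hz'))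
    have hdiff : ∀ᶠ y in 𝓝 z, HasFDerivAt u (g y) y := by
      filter_upwards [hop.eventually_mem hz'] with y hy
      exact ((hu.1.contDiffAt (hop.mem_nhds hy)).differentiableAt (by norm_num)).hasFDerivAt
    have hg1 : ContDiffAt ℝ 1 g z := hca.fderiv_right (m := 1) (by norm_num)
    have hgd : DifferentiableAt ℝ g z := hg1.differentiableAt (by norm_num)
    set A := fderiv ℝ g z with hA
    have hgA : HasFDerivAt g A z := hgd.hasFDerivAt
    have hsymm : ∀ v w, A v w = A w v := fun v w =>
      second_derivative_symmetric_of_eventually hdiff hgA v w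
    have hlap : A 1 1 + A Complex.I Complex.I = 0 := by
      have h2 := hu.2 z hz'
      rw [iteratedFDeriv_two_apply, iteratedFDeriv_two_apply] at h2
      simpa [← hg, ← hA] using h2
    set φ : (ℂ →L[ℝ] ℝ) →L[ℝ] ℂ :=
      Complex.ofRealCLM.comp (ContinuousLinearMap.apply ℝ ℝ (1:ℂ)) -
        ((ContinuousLinearMap.id ℝ ℝ).smulRight Complex.I).comp
          (ContinuousLinearMap.apply ℝ ℝ Complex.I) with hφ
    have hφ_apply : ∀ L : ℂ →L[ℝ] ℝ, φ L = (L 1 : ℝ) - (L Complex.I : ℝ) * Complex.I := by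
      intro L
      simp [hφ, Complex.real_smul]
    have hfe : (fun w => ((g w 1 : ℝ) : ℂ) - (g w Complex.I : ℝ) * Complex.I)
        = fun w => φ (g w) := by
      funext w; rw [hφ_apply]
    have hfA : HasFDerivAt (fun w => ((g w 1 : ℝ) : ℂ) - (g w Complex.I : ℝ) * Complex.I)
        (φ.comp A) z := by
      rw [hfe]; exact φ.hasFDerivAt.comp z hgA
    set c : ℂ := φ (A 1) with hc
    have key : ∀ v : ℂ, φ (A v) = v * c := by
      intro v
      have hv : v = v.re • (1:ℂ) + v.im • Complex.I := by
        simp [Complex.real_smul, Complex.re_add_im]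
      have hAv : A v = v.re • A 1 + v.im • A Complex.I := by
        nth_rewrite 1 [hv]
        rw [map_add, map_smul, map_smul]
      have e1 : A v 1 = v.re * A 1 1 + v.im * A Complex.I 1 := by
        rw [hAv]; simp [smul_eq_mul]
      have e2 : A v Complex.I = v.re * A 1 Complex.I + v.im * A Complex.I Complex.I := by
        rw [hAv]; simp [smul_eq_mul]
      have hII : A Complex.I Complex.I = - A 1 1 := by linarith [hlap]
      have hI1 : A Complex.I 1 = A 1 Complex.I := hsymm _ _
      rw [hφ_apply, hc, hφ_apply, e1, e2, hII, hI1]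
      apply Complex.ext <;>
        simp [Complex.mul_re, Complex.mul_im] <;> ring
    have hCL : ((ContinuousLinearMap.smulRight (1 : ℂ →L[ℂ] ℂ) c).restrictScalars ℝ)
        = φ.comp A := by
      ext v
      simp [key v, smul_eq_mul, mul_comm]
    have : HasFDerivAt (fun w => ((g w 1 : ℝ) : ℂ) - (g w Complex.I : ℝ) * Complex.I)
        (ContinuousLinearMap.smulRight (1 : ℂ →L[ℂ] ℂ) c) z :=
      hasFDerivAt_of_restrictScalars (h := hfA) (H := hCL)
    exact this.differentiableAt.differentiableWithinAt
  · -- the fderiv identity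
    intro z hz
    have hdz : HasFDerivAt u (g z) z :=
      ((hu.1.contDiffAt (hop.mem_nhds hz)).differentiableAt (by norm_num)).hasFDerivAt
    have : dualC ((g z 1 : ℝ) - (g z Complex.I : ℝ) * Complex.I) = g z := by
      ext v
      have hv : v = v.re • (1:ℂ) + v.im • Complex.I := by
        simp [Complex.real_smul, Complex.re_add_im]
      rw [dualC_apply]
      conv_rhs => rw [hv]
      rw [map_add, map_smul, map_smul]
      simp [Complex.mul_re, Complex.mul_im, smul_eq_mul]
      ring
    rw [this]; exact hdz

open intervalIntegral in
lemma hasHoloField_circle_avg {u : ℂ → ℝ} {f : ℂ → ℂ} (h : HasHoloField u f)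
    {c : ℂ} {ρ : ℝ} (hball : closedBall c ρ ⊆ ({(0:ℂ)}ᶜ))
    {r : ℝ} (hr : 0 < r) (hrρ : r < ρ) :
    ∫ t in (0:ℝ)..(2*Real.pi), u (circleMap c r t) = 2 * Real.pi * u c := by
  have hop : IsOpen ({(0:ℂ)}ᶜ) := isOpen_compl_singleton
  have hρ : 0 < ρ := hr.trans hrρ
  have hcu : ∀ w : ℂ, w ≠ 0 → ContinuousAt u w := fun w hw => (h.2 w hw).continuousAt
  have hucont : ContinuousOn u ({(0:ℂ)}ᶜ) := fun w hw => (hcu w hw).continuousWithinAt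
  have hfc : ContinuousOn f ({(0:ℂ)}ᶜ) := h.1.continuousOn
  have hmem : ∀ {x : ℝ} (t : ℝ), 0 ≤ x → x ≤ ρ → circleMap c x t ∈ closedBall c ρ := by
    intro x t hx hxρ
    exact closedBall_subset_closedBall hxρ (sphere_subset_closedBall (circleMap_mem_sphere c hx t))
  have hne : ∀ {x : ℝ} (t : ℝ), 0 ≤ x → x ≤ ρ → circleMap c x t ≠ 0 := fun t hx hxρ =>
    hball (hmem t hx hxρ)
  -- bound for f on the closed ball
  obtain ⟨M, hM⟩ : ∃ M, ∀ w ∈ closedBall c ρ, ‖f w‖ ≤ M :=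
    (isCompact_closedBall c ρ).exists_bound_of_continuousOn (hfc.mono hball)
  set m : ℝ → ℝ := fun x => ∫ t in (0:ℝ)..(2*Real.pi), u (circleMap c x t) with hm
  have hcont_ut : ∀ {x : ℝ}, 0 ≤ x → x ≤ ρ → Continuous fun t => u (circleMap c x t) := by
    intro x hx hxρ
    apply ContinuousOn.comp_continuous (hucont.mono hball) (continuous_circleMap c x)
    intro t; exact hmem t hx hxρ
  -- derivative of m vanishes on (0, ρ)
  have hderiv : ∀ x₀ : ℝ, 0 < x₀ → x₀ < ρ → HasDerivAt m 0 x₀ := by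
    intro x₀ hx₀ hx₀ρ
    set ε : ℝ := min (x₀/2) ((ρ - x₀)/2) with hε
    have hεpos : 0 < ε := lt_min (by linarith) (by linarith)
    have hball_sub : ∀ x ∈ ball x₀ ε, 0 < x ∧ x < ρ := by
      intro x hx
      rw [mem_ball, Real.dist_eq, abs_lt] at hx
      constructor
      · have := min_le_left (x₀/2) ((ρ - x₀)/2); linarith [hx.1]
      · have := min_le_right (x₀/2) ((ρ - x₀)/2); linarith [hx.2]
    set F' : ℝ → ℝ → ℝ := fun x t => (f (circleMap c x t) * Complex.exp (t * Complex.I)).re with hF'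
    have hdF : ∀ t : ℝ, ∀ x ∈ ball x₀ ε, HasDerivAt (fun x => u (circleMap c x t)) (F' x t) x := by
      intro t x hx
      obtain ⟨hx1, hx2⟩ := hball_sub x hx
      set e : ℂ := Complex.exp (t * Complex.I) with he
      have hinner : HasDerivAt (fun x : ℝ => c + (x : ℂ) * e) e x := by
        have h1 : HasDerivAt (fun x : ℝ => (x : ℂ)) 1 x := Complex.ofRealCLM.hasDerivAt
        simpa using (h1.mul_const e).const_add c
      have houter : HasFDerivAt u (dualC (f (circleMap c x t))) (circleMap c x t) :=
        h.2 _ (hne t hx1.le hx2.le)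
      have hcomp := houter.comp_hasDerivAt x (show HasDerivAt (fun x : ℝ => circleMap c x t) e x from hinner)
      simpa [circleMap, dualC_apply, hF', he, Function.comp_def] using hcomp
    have hbound : ∀ t : ℝ, ∀ x ∈ ball x₀ ε, ‖F' x t‖ ≤ M := by
      intro t x hx
      obtain ⟨hx1, hx2⟩ := hball_sub x hx
      have h1 : ‖F' x t‖ ≤ ‖f (circleMap c x t) * Complex.exp (t * Complex.I)‖ :=
        Complex.abs_re_le_norm _
      have h2 : ‖f (circleMap c x t) * Complex.exp (t * Complex.I)‖ = ‖f (circleMap c x t)‖ := by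
        rw [norm_mul]
        simp [Complex.norm_exp_ofReal_mul_I]
      rw [h2] at h1
      exact h1.trans (hM _ (hmem t hx1.le hx2.le))
    have hF'cont : Continuous (F' x₀) := by
      have h1 : Continuous fun t : ℝ => f (circleMap c x₀ t) :=
        (hfc.mono hball).comp_continuous (continuous_circleMap c x₀)
          (fun t => hmem t hx₀.le hx₀ρ.le)
      have h2 : Continuous fun t : ℝ => Complex.exp (t * Complex.I) := by fun_prop
      exact Complex.continuous_re.comp (h1.mul h2)
    have key := intervalIntegral.hasDerivAt_integral_of_dominated_loc_of_deriv_le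
      (F := fun x t => u (circleMap c x t)) (F' := F') (x₀ := x₀)
      (a := 0) (b := 2*Real.pi) (bound := fun _ => M) (μ := MeasureTheory.volume) (ball_mem_nhds x₀ hεpos)
      (by
        filter_upwards [isOpen_Ioo.eventually_mem (show x₀ ∈ Set.Ioo 0 ρ from ⟨hx₀, hx₀ρ⟩)]
          with x hx
        exact (hcont_ut hx.1.le hx.2.le).aestronglyMeasurable)
      ((hcont_ut hx₀.le hx₀ρ.le).intervalIntegrable _ _)
      hF'cont.aestronglyMeasurable
      (Filter.Eventually.of_forall fun t _ x hx => hbound t x hx)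
      intervalIntegrable_const
      (Filter.Eventually.of_forall fun t _ x hx => hdF t x hx)
    -- now compute the integral of F' x₀ : it is zero
    have hzero : (∫ t in (0:ℝ)..(2*Real.pi), F' x₀ t) = 0 := by
      have hcirc : (∮ z in C(c, x₀), f z) = 0 := by
        apply Complex.circleIntegral_eq_zero_of_differentiable_on_off_countable hx₀.le
          Set.countable_empty
          ((hfc.mono hball).mono (closedBall_subset_closedBall hx₀ρ.le))
        intro z hz
        exact h.1.differentiableAt (hop.mem_nhds (hball
          (closedBall_subset_closedBall hx₀ρ.le (ball_subset_closedBall hz.1))))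
      have hcirc' : (∫ t in (0:ℝ)..(2*Real.pi),
          ((x₀ : ℂ) * Complex.I) * (Complex.exp (t * Complex.I) * f (circleMap c x₀ t))) = 0 := by
        rw [← hcirc, circleIntegral]
        apply intervalIntegral.integral_congr
        intro t _
        simp only [deriv_circleMap]
        simp [circleMap, smul_eq_mul]
        ring
      rw [intervalIntegral.integral_const_mul] at hcirc'
      have hx₀I : ((x₀ : ℂ) * Complex.I) ≠ 0 := by
        simp [Complex.ext_iff, hx₀.ne']
      have hint0 : (∫ t in (0:ℝ)..(2*Real.pi),
          Complex.exp (t * Complex.I) * f (circleMap c x₀ t)) = 0 :=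
        (mul_eq_zero.mp hcirc').resolve_left hx₀I
      have hInt : IntervalIntegrable
          (fun t : ℝ => Complex.exp (t * Complex.I) * f (circleMap c x₀ t))
          MeasureTheory.volume 0 (2*Real.pi) := by
        apply Continuous.intervalIntegrable
        exact (Continuous.cexp (by continuity)).mul
          ((hfc.mono hball).comp_continuous (continuous_circleMap c x₀)
            (fun t => hmem t hx₀.le hx₀ρ.le))
      have hre := Complex.reCLM.intervalIntegral_comp_comm hInt
      rw [hint0] at hre
      have : (∫ t in (0:ℝ)..(2*Real.pi),
          (Complex.exp (t * Complex.I) * f (circleMap c x₀ t)).re) = 0 := by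
        simpa using hre
      calc (∫ t in (0:ℝ)..(2*Real.pi), F' x₀ t)
          = ∫ t in (0:ℝ)..(2*Real.pi),
              (Complex.exp (t * Complex.I) * f (circleMap c x₀ t)).re := by
            apply intervalIntegral.integral_congr
            intro s _
            simp [hF', mul_comm]
        _ = 0 := this
    rw [← hzero]
    exact key.2
  -- m is constant on (0, r]
  have hconst : ∀ s : ℝ, 0 < s → s ≤ r → m r = m s := by
    intro s hs hsr
    have hcm : ContinuousOn m (Icc s r) := fun x hx =>
      ((hderiv x (hs.trans_le hx.1) (lt_of_le_of_lt hx.2 hrρ)).continuousAt).continuousWithinAt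
    exact constant_of_has_deriv_right_zero hcm
      (fun x hx => ((hderiv x (hs.trans_le hx.1)
        (lt_trans hx.2 hrρ)).hasDerivWithinAt)) r (right_mem_Icc.mpr hsr)
  -- limit as s → 0
  have hlim : ∀ ε' : ℝ, 0 < ε' → |m r - 2 * Real.pi * u c| ≤ 2 * Real.pi * ε' := by
    intro ε' hε'
    have hc0 : c ≠ 0 := hball (mem_closedBall_self hρ.le)
    obtain ⟨δ, hδ, hδ'⟩ := Metric.continuousAt_iff.mp (hcu c hc0) ε' hε'
    set s : ℝ := min (δ/2) r with hs
    have hs0 : 0 < s := lt_min (by linarith) hr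
    have hsr : s ≤ r := min_le_right _ _
    have hsδ : s < δ := lt_of_le_of_lt (min_le_left _ _) (by linarith)
    have hsρ : s ≤ ρ := le_of_lt (lt_of_le_of_lt hsr hrρ)
    rw [hconst s hs0 hsr]
    have hint1 : IntervalIntegrable (fun t => u (circleMap c s t))
        MeasureTheory.volume 0 (2*Real.pi) :=
      (hcont_ut hs0.le hsρ).intervalIntegrable _ _
    have heq : m s - 2 * Real.pi * u c
        = ∫ t in (0:ℝ)..(2*Real.pi), (u (circleMap c s t) - u c) := by
      rw [intervalIntegral.integral_sub hint1 intervalIntegrable_const,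
        intervalIntegral.integral_const]
      simp [hm]
      try ring
    have hb : ‖∫ t in (0:ℝ)..(2*Real.pi), (u (circleMap c s t) - u c)‖
        ≤ ε' * |2*Real.pi - 0| := by
      apply intervalIntegral.norm_integral_le_of_norm_le_const
      intro t ht
      have hd : dist (circleMap c s t) c = s :=
        mem_sphere.mp (circleMap_mem_sphere c hs0.le t)
      have := hδ' (show dist (circleMap c s t) c < δ by rw [hd]; exact hsδ)
      rw [Real.dist_eq] at this
      exact le_of_lt this
    rw [heq]
    calc |∫ t in (0:ℝ)..(2*Real.pi), (u (circleMap c s t) - u c)| ≤ ε' * |2*Real.pi - 0| := hb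
      _ = 2 * Real.pi * ε' := by
          rw [sub_zero, abs_of_nonneg Real.two_pi_pos.le]; ring
  have habs : |m r - 2*Real.pi*u c| = 0 := by
    by_contra hne0
    have hpos : 0 < |m r - 2*Real.pi*u c| := lt_of_le_of_ne (abs_nonneg _) (Ne.symm hne0)
    have := hlim (|m r - 2*Real.pi*u c| / (4*Real.pi)) (by positivity)
    rw [div_eq_inv_mul] at this
    have hπ : Real.pi ≠ 0 := Real.pi_ne_zero
    have h4 : (2:ℝ) * Real.pi * ((4*Real.pi)⁻¹ * |m r - 2*Real.pi*u c|)
        = |m r - 2*Real.pi*u c|/2 := by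
      field_simp
      ring
    linarith
  have hfin : m r = 2*Real.pi*u c := by
    have := abs_eq_zero.mp habs; linarith
  simpa [hm] using hfin

lemma compl_zero_preconnected : IsPreconnected ({(0:ℂ)}ᶜ) :=
  (isConnected_compl_singleton_of_one_lt_rank
    (by rw [Complex.rank_real_complex]; norm_num) 0).isPreconnected

/-- If the field vanishes identically, `u` is constant on `ℂ \ {0}`. -/
lemma hasHoloField_const_of_field_zero {u : ℂ → ℝ} {f : ℂ → ℂ} (h : HasHoloField u f)
    (hf0 : ∀ z : ℂ, z ≠ 0 → f z = 0) {z w : ℂ} (hz : z ≠ 0) (hw : w ≠ 0) : u z = u w := by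
  have hop : IsOpen ({(0:ℂ)}ᶜ) := isOpen_compl_singleton
  have hloc : ∀ z : ℂ, z ≠ 0 → ∀ᶠ w' in 𝓝 z, u w' = u z := by
    intro z hz
    obtain ⟨ρ, hρ, hsub⟩ := Metric.isOpen_iff.mp hop z hz
    filter_upwards [ball_mem_nhds z hρ] with w' hw'
    apply (convex_ball z ρ).is_const_of_fderivWithin_eq_zero (𝕜 := ℝ) (f := u)
      ?_ ?_ hw' (mem_ball_self hρ)
    · intro x hx
      have := h.2 x (hsub hx)
      rw [hf0 x (hsub hx), dualC_zero] at this
      exact this.differentiableAt.differentiableWithinAt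
    · intro x hx
      rw [fderivWithin_of_isOpen isOpen_ball hx]
      have := h.2 x (hsub hx)
      rw [hf0 x (hsub hx), dualC_zero] at this
      exact this.fderiv
  -- preconnectedness argument
  by_contra hne
  set S : Set ℂ := {x | x ≠ 0 ∧ u x = u w} with hS
  set S' : Set ℂ := {x | x ≠ 0 ∧ u x ≠ u w} with hS'
  have hSopen : IsOpen S := by
    rw [Metric.isOpen_iff]
    intro x hx
    obtain ⟨ρ, hρ, hsub⟩ := Metric.isOpen_iff.mp hop x hx.1
    obtain ⟨ρ', hρ', hsub'⟩ := Metric.eventually_nhds_iff_ball.mp (hloc x hx.1)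
    refine ⟨min ρ ρ', lt_min hρ hρ', fun y hy => ?_⟩
    have h1 : y ∈ ball x ρ := ball_subset_ball (min_le_left _ _) hy
    have h2 : y ∈ ball x ρ' := ball_subset_ball (min_le_right _ _) hy
    exact ⟨hsub h1, (hsub' y h2).trans hx.2⟩
  have hS'open : IsOpen S' := by
    rw [Metric.isOpen_iff]
    intro x hx
    obtain ⟨ρ, hρ, hsub⟩ := Metric.isOpen_iff.mp hop x hx.1
    obtain ⟨ρ', hρ', hsub'⟩ := Metric.eventually_nhds_iff_ball.mp (hloc x hx.1)
    refine ⟨min ρ ρ', lt_min hρ hρ', fun y hy => ?_⟩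
    have h1 : y ∈ ball x ρ := ball_subset_ball (min_le_left _ _) hy
    have h2 : y ∈ ball x ρ' := ball_subset_ball (min_le_right _ _) hy
    refine ⟨hsub h1, fun hc => hx.2 ?_⟩
    rw [← hsub' y h2, hc]
  have hcover : ({(0:ℂ)}ᶜ) ⊆ S ∪ S' := by
    intro x hx
    by_cases hc : u x = u w
    · exact Or.inl ⟨hx, hc⟩
    · exact Or.inr ⟨hx, hc⟩
  have hSne : (({(0:ℂ)}ᶜ) ∩ S).Nonempty := ⟨w, hw, hw, rfl⟩
  have hS'ne : (({(0:ℂ)}ᶜ) ∩ S').Nonempty := ⟨z, hz, hz, hne⟩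
  obtain ⟨x, -, hx1, hx2⟩ := compl_zero_preconnected S S' hSopen hS'open hcover hSne hS'ne
  exact hx2.2 hx1.2

/-- Strong maximum principle: a local max forces `u` to be constant on `ℂ \ {0}`. -/
lemma hasHoloField_const_of_isLocalMax {u : ℂ → ℝ} {f : ℂ → ℂ} (h : HasHoloField u f)
    {z₁ : ℂ} (hz₁ : z₁ ≠ 0) (hmax : ∀ᶠ w in 𝓝 z₁, u w ≤ u z₁) :
    ∀ z : ℂ, z ≠ 0 → u z = u z₁ := by
  have hop : IsOpen ({(0:ℂ)}ᶜ) := isOpen_compl_singleton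
  have hcu : ∀ w : ℂ, w ≠ 0 → ContinuousAt u w := fun w hw => (h.2 w hw).continuousAt
  -- find a closed ball on which u ≤ u z₁
  obtain ⟨ρ, hρ, hsub⟩ := Metric.eventually_nhds_iff_ball.mp
    ((hmax.and (hop.eventually_mem hz₁)).and ((hmax.and (hop.eventually_mem hz₁))))
  have hsub1 : ∀ w ∈ ball z₁ ρ, u w ≤ u z₁ := fun w hw => ((hsub w hw).1).1
  have hsub2 : ∀ w ∈ ball z₁ ρ, w ≠ 0 := fun w hw => ((hsub w hw).1).2
  -- u is constant on the ball
  have hball_eq : ∀ w ∈ ball z₁ (ρ/2), u w = u z₁ := by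
    intro w hw
    rcases eq_or_ne w z₁ with rfl | hwne
    · rfl
    by_contra hne
    have hlt : u w < u z₁ := lt_of_le_of_ne (hsub1 w (ball_subset_ball (by linarith) hw)) hne
    set r : ℝ := dist w z₁ with hr
    have hr0 : 0 < r := dist_pos.mpr hwne
    have hrρ : r < ρ/2 := hw
    have hcb : closedBall z₁ (3*ρ/4) ⊆ ({(0:ℂ)}ᶜ) := by
      intro y hy
      exact hsub2 y (lt_of_le_of_lt (mem_closedBall.mp hy) (by linarith))
    have hmvp := hasHoloField_circle_avg h hcb hr0 (by linarith : r < 3*ρ/4)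
    -- find t₀ with circleMap z₁ r t₀ = w
    have hwsph : w ∈ sphere z₁ r := mem_sphere.mpr rfl
    have : w ∈ Set.range (circleMap z₁ r) := by
      rw [range_circleMap, abs_of_pos hr0]; exact hwsph
    obtain ⟨t₀, ht₀⟩ := this
    -- the circle function
    set g : ℝ → ℝ := fun t => u (circleMap z₁ r t) with hgdef
    have hgper : Function.Periodic g (2*Real.pi) := fun t => by
      simp [hgdef, (periodic_circleMap z₁ r).eq, periodic_circleMap z₁ r t]
    have hsphsub : ∀ t : ℝ, circleMap z₁ r t ∈ ball z₁ ρ := by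
      intro t
      have := circleMap_mem_sphere z₁ hr0.le t
      rw [mem_sphere] at this
      rw [mem_ball, this]; linarith
    have hgcont : Continuous g := by
      have : ContinuousOn u (ball z₁ ρ) := fun y hy => (hcu y (hsub2 y hy)).continuousWithinAt
      exact this.comp_continuous (continuous_circleMap z₁ r) hsphsub
    have hgle : ∀ t : ℝ, g t ≤ u z₁ := fun t => hsub1 _ (hsphsub t)
    have hstrict : (∫ t in t₀..(t₀ + 2*Real.pi), g t)
        < ∫ t in t₀..(t₀ + 2*Real.pi), (fun _ => u z₁) t := by
      apply intervalIntegral.integral_lt_integral_of_continuousOn_of_le_of_exists_lt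
        (by linarith [Real.two_pi_pos])
        hgcont.continuousOn continuousOn_const
        (fun x _ => hgle x)
      exact ⟨t₀, ⟨le_refl _, by linarith [Real.two_pi_pos]⟩, by rw [hgdef]; simp [ht₀]; exact hlt⟩
    rw [intervalIntegral.integral_const] at hstrict
    have hper := hgper.intervalIntegral_add_eq t₀ 0
    rw [zero_add] at hper
    rw [hper, hmvp] at hstrict
    simp at hstrict
  -- field vanishes on the small ball
  have hf0ball : ∀ w ∈ ball z₁ (ρ/2), f w = 0 := by
    intro w hw
    have hw0 : w ≠ 0 := hsub2 w (ball_subset_ball (by linarith) hw)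
    have hever : u =ᶠ[𝓝 w] (fun _ => u z₁) := by
      filter_upwards [isOpen_ball.eventually_mem hw] with y hy
      exact hball_eq y hy
    have h1 : HasFDerivAt u (dualC (f w)) w := h.2 w hw0
    have h2 : HasFDerivAt (fun _ : ℂ => u z₁) (dualC (f w)) w :=
      (Filter.EventuallyEq.hasFDerivAt_iff hever).mp h1
    have h3 : dualC (f w) = 0 := by
      have := (hasFDerivAt_const (u z₁) w).unique h2
      rw [← this]
    exact dualC_eq_zero h3
  -- identity theorem: field vanishes everywhere
  have hf0 : ∀ z : ℂ, z ≠ 0 → f z = 0 := by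
    have han : AnalyticOnNhd ℂ f ({(0:ℂ)}ᶜ) := h.1.analyticOnNhd hop
    have heq := han.eqOn_zero_of_preconnected_of_eventuallyEq_zero
      compl_zero_preconnected (z₀ := z₁) hz₁ ?_
    · intro z hz; exact heq hz
    · filter_upwards [ball_mem_nhds z₁ (by linarith : (0:ℝ) < ρ/2)] with y hy
      exact hf0ball y hy
  intro z hz
  exact hasHoloField_const_of_field_zero h hf0 hz hz₁

lemma hasFDerivAt_log_abs {z : ℂ} (hz : z ≠ 0) :
    HasFDerivAt (fun w : ℂ => Real.log (‖w‖)) (dualC z⁻¹) z := by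
  have hns : Complex.normSq z ≠ 0 := (Complex.normSq_pos.mpr hz).ne'
  have hre : HasFDerivAt (fun w : ℂ => w.re) Complex.reCLM z := Complex.reCLM.hasFDerivAt
  have him : HasFDerivAt (fun w : ℂ => w.im) Complex.imCLM z := Complex.imCLM.hasFDerivAt
  have hn : HasFDerivAt (fun w : ℂ => Complex.normSq w)
      (z.re • Complex.reCLM + z.re • Complex.reCLM
        + (z.im • Complex.imCLM + z.im • Complex.imCLM)) z := by
    have h1 := hre.mul hre
    have h2 := him.mul him
    have h3 := h1.add h2
    have : (fun w : ℂ => Complex.normSq w) = fun w : ℂ => w.re * w.re + w.im * w.im := by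
      funext w; simp [Complex.normSq_apply]
    rw [this]
    exact h3
  have hlog := (Real.hasDerivAt_log hns).comp_hasFDerivAt z hn
  have heq : (fun w : ℂ => Real.log (‖w‖))
      = fun w : ℂ => (1/2) * Real.log (Complex.normSq w) := by
    funext w
    rw [Complex.norm_def, Real.log_sqrt (Complex.normSq_nonneg w)]
    ring
  rw [heq]
  have := hlog.const_mul (1/2 : ℝ)
  refine this.congr_fderiv ?_
  ext v
  rw [dualC_apply]
  have hL : (z⁻¹ * v).re = (v.re * z.re + v.im * z.im) / Complex.normSq z := by
    rw [mul_comm, ← div_eq_mul_inv, Complex.div_re]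
    ring
  rw [hL]
  simp only [ContinuousLinearMap.smul_apply, ContinuousLinearMap.add_apply, smul_eq_mul,
    Complex.reCLM_apply, Complex.imCLM_apply]
  field_simp
  ring

lemma hasHoloField_add_log {u : ℂ → ℝ} {f : ℂ → ℂ} (h : HasHoloField u f) (ε : ℝ) :
    HasHoloField (fun z => u z + ε * Real.log (‖z‖))
      (fun z => f z + (ε : ℂ) * z⁻¹) := by
  constructor
  · apply h.1.add
    intro z hz
    exact (((differentiableAt_inv hz).const_mul _)).differentiableWithinAt
  · intro z hz
    have h1 := h.2 z hz
    have h2 := (hasFDerivAt_log_abs hz).const_mul ε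
    have h3 := h1.add h2
    refine h3.congr_fderiv ?_
    ext v
    simp [dualC_apply, add_mul, Complex.add_re, mul_assoc, Complex.re_ofReal_mul]

lemma annulus_bound {v : ℂ → ℝ} {g : ℂ → ℂ} (hv : HasHoloField v g) {a b B : ℝ}
    (ha : 0 < a)
    (hinner : ∀ w : ℂ, ‖w‖ = a → v w ≤ B)
    (houter : ∀ w : ℂ, ‖w‖ = b → v w ≤ B)
    {z : ℂ} (hza : a ≤ ‖z‖) (hzb : ‖z‖ ≤ b) : v z ≤ B := by
  have hab : a ≤ b := le_trans hza hzb
  have hb : 0 < b := lt_of_lt_of_le ha hab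
  have habs : ∀ w : ℂ, dist w 0 = ‖w‖ := fun w => by
    rw [Complex.dist_eq, sub_zero]
  set K : Set ℂ := closedBall 0 b \ ball 0 a with hK
  have hKmem : ∀ w : ℂ, w ∈ K ↔ (a ≤ ‖w‖ ∧ ‖w‖ ≤ b) := by
    intro w
    constructor
    · rintro ⟨h1, h2⟩
      rw [mem_closedBall, habs] at h1
      rw [mem_ball, habs] at h2
      exact ⟨not_lt.mp h2, h1⟩
    · rintro ⟨h1, h2⟩
      exact ⟨by rwa [mem_closedBall, habs], by rw [mem_ball, habs]; exact not_lt.mpr h1⟩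
  have hKne : ∀ w ∈ K, w ≠ 0 := by
    intro w hw hc
    have := ((hKmem w).mp hw).1
    rw [hc] at this
    simp at this
    linarith
  have hKcompact : IsCompact K := (isCompact_closedBall 0 b).diff isOpen_ball
  have hKz : z ∈ K := (hKmem z).mpr ⟨hza, hzb⟩
  have hcont : ContinuousOn v K := fun w hw =>
    ((hv.2 w (hKne w hw)).continuousAt).continuousWithinAt
  obtain ⟨p, hpK, hpmax⟩ := hKcompact.exists_isMaxOn ⟨z, hKz⟩ hcont
  obtain ⟨hpa, hpb⟩ := (hKmem p).mp hpK
  have hvz : v z ≤ v p := hpmax hKz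
  rcases eq_or_lt_of_le hpb with hpb' | hpb'
  · exact hvz.trans (houter p hpb')
  rcases eq_or_lt_of_le hpa with hpa' | hpa'
  · exact hvz.trans (hinner p hpa'.symm)
  -- interior case: p is a local max
  have hopen : IsOpen (ball (0:ℂ) b \ closedBall 0 a) := isOpen_ball.sdiff isClosed_closedBall
  have hpmem : p ∈ ball (0:ℂ) b \ closedBall 0 a := by
    constructor
    · rw [mem_ball, habs]; exact hpb'
    · rw [mem_closedBall, habs]; push_neg; exact hpa'
  have hsubK : (ball (0:ℂ) b \ closedBall 0 a) ⊆ K := by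
    rintro w ⟨h1, h2⟩
    rw [mem_ball, habs] at h1
    rw [mem_closedBall, habs] at h2
    exact (hKmem w).mpr ⟨le_of_lt (not_le.mp h2), h1.le⟩
  have hloc : ∀ᶠ w in 𝓝 p, v w ≤ v p := by
    filter_upwards [hopen.eventually_mem hpmem] with w hw
    exact hpmax (hsubK hw)
  have hconst := hasHoloField_const_of_isLocalMax hv (hKne p hpK) hloc
  have hbC : ‖((b : ℂ))‖ = b := by
    rw [Complex.norm_real, Real.norm_eq_abs, abs_of_pos hb]
  have hbne : ((b:ℝ) : ℂ) ≠ 0 := by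
    simp [Complex.ext_iff, hb.ne']
  calc v z = v p := hconst z (hKne z hKz)
    _ = v ((b:ℝ) : ℂ) := (hconst _ hbne).symm
    _ ≤ B := houter _ hbC

theorem harmonic_bddAbove_const (u : ℂ → ℝ)
    (hu : HarmonicOn u ({(0:ℂ)}ᶜ))
    (h0 : ∃ C : ℝ, ∀ᶠ p in 𝓝[≠] (0:ℂ), u p ≤ C)
    (hinf : ∃ C : ℝ, ∀ᶠ p in Filter.comap (fun p : ℂ => ‖p‖) atTop, u p ≤ C) :
    ∃ c : ℝ, ∀ z : ℂ, z ≠ 0 → u z = c := by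
  obtain ⟨f, hf⟩ := harmonicOn_hasHoloField hu
  have hop : IsOpen ({(0:ℂ)}ᶜ) := isOpen_compl_singleton
  -- bound near 0
  obtain ⟨C₀, hC₀⟩ := h0
  rw [eventually_nhdsWithin_iff] at hC₀
  obtain ⟨r₀, hr₀, hC₀'⟩ := Metric.eventually_nhds_iff_ball.mp hC₀
  have hnear0 : ∀ p : ℂ, p ≠ 0 → ‖p‖ < r₀ → u p ≤ C₀ := by
    intro p hp hpr
    exact hC₀' p (by rw [mem_ball, Complex.dist_eq, sub_zero]; exact hpr) hp
  -- bound near ∞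
  obtain ⟨C1, hC1⟩ := hinf
  rw [Filter.eventually_comap] at hC1
  obtain ⟨R₁, hR₁⟩ := Filter.eventually_atTop.mp hC1
  have hfar : ∀ p : ℂ, R₁ ≤ ‖p‖ → u p ≤ C1 := by
    intro p hp
    exact hR₁ (‖p‖) hp p (by rfl)
  -- max on the unit circle
  have hsph_ne : (sphere (0:ℂ) 1).Nonempty := ⟨1, by simp⟩
  have habs1 : ∀ w : ℂ, w ∈ sphere (0:ℂ) 1 ↔ ‖w‖ = 1 := by
    intro w; rw [mem_sphere, Complex.dist_eq, sub_zero]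
  have hsph_ne0 : ∀ w ∈ sphere (0:ℂ) 1, w ≠ 0 := by
    intro w hw hc
    rw [habs1] at hw
    rw [hc] at hw
    simp at hw
  obtain ⟨z₁, hz₁s, hz₁max⟩ := (isCompact_sphere (0:ℂ) 1).exists_isMaxOn hsph_ne
    (fun w hw => ((hf.2 w (hsph_ne0 w hw)).continuousAt).continuousWithinAt)
  have hz₁0 : z₁ ≠ 0 := hsph_ne0 z₁ hz₁s
  -- inner estimate
  have habspos : ∀ z : ℂ, z ≠ 0 → 0 < ‖z‖ := fun z hz => by
    simpa using norm_pos_iff.mpr hz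
  have hinnerb : ∀ z : ℂ, z ≠ 0 → ‖z‖ < 1 → u z ≤ u z₁ := by
    intro z hz hz1
    have hzpos : 0 < ‖z‖ := habspos z hz
    have key : ∀ ε : ℝ, 0 < ε → u z + ε * Real.log (‖z‖) ≤ u z₁ := by
      intro ε hε
      have hvf := hasHoloField_add_log hf ε
      set δ : ℝ := min (min (‖z‖ / 2) (r₀/2)) (Real.exp ((u z₁ - C₀)/ε)) with hδ
      have hδpos : 0 < δ := lt_min (lt_min (by linarith) (by linarith)) (Real.exp_pos _)
      have hδz : δ ≤ ‖z‖ :=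
        le_trans (min_le_left _ _) (le_trans (min_le_left _ _) (by linarith))
      have hδr₀ : δ < r₀ :=
        lt_of_le_of_lt (le_trans (min_le_left _ _) (min_le_right _ _)) (by linarith)
      have hδlog : C₀ + ε * Real.log δ ≤ u z₁ := by
        have h1 : Real.log δ ≤ (u z₁ - C₀)/ε := by
          rw [← Real.log_exp ((u z₁ - C₀)/ε)]
          exact Real.log_le_log hδpos (min_le_right _ _)
        have h2 := mul_le_mul_of_nonneg_left h1 hε.le
        have h3 : ε * ((u z₁ - C₀)/ε) = u z₁ - C₀ := by field_simp
        linarith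
      apply annulus_bound hvf hδpos ?_ ?_ hδz hz1.le
      · intro w hw
        have hw0 : w ≠ 0 := by
          intro hc; rw [hc] at hw; simp at hw; exact hδpos.ne' hw.symm
        have h1 : u w ≤ C₀ := hnear0 w hw0 (by rw [hw]; exact hδr₀)
        rw [hw]
        linarith
      · intro w hw
        have h1 : u w ≤ u z₁ := hz₁max ((habs1 w).mpr hw)
        rw [hw]
        simp [Real.log_one]
        linarith
    have hlogneg : Real.log (‖z‖) < 0 := Real.log_neg hzpos hz1
    by_contra hcon
    push_neg at hcon
    set L : ℝ := Real.log (‖z‖) with hL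
    set ε : ℝ := (u z - u z₁) / (2 * (-L)) with hε
    have hεpos : 0 < ε := by
      apply div_pos (by linarith) (by linarith)
    have hkey := key ε hεpos
    have hLne : L ≠ 0 := ne_of_lt hlogneg
    have heq : ε * L = -(u z - u z₁)/2 := by
      rw [hε]
      field_simp
    linarith
  -- outer estimate
  have houterb : ∀ z : ℂ, z ≠ 0 → 1 < ‖z‖ → u z ≤ u z₁ := by
    intro z hz hz1
    have key : ∀ ε : ℝ, 0 < ε → u z + (-ε) * Real.log (‖z‖) ≤ u z₁ := by
      intro ε hε
      have hvf := hasHoloField_add_log hf (-ε)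
      set R : ℝ := max (max (‖z‖) (R₁ + 1)) (Real.exp ((C1 - u z₁)/ε)) with hR
      have hRz : ‖z‖ ≤ R := le_trans (le_max_left _ _) (le_max_left _ _)
      have hRR₁ : R₁ ≤ R := le_trans (by linarith [le_max_right (‖z‖) (R₁+1)])
        (le_max_left _ _)
      have hRlog : C1 + (-ε) * Real.log R ≤ u z₁ := by
        have h1 : (C1 - u z₁)/ε ≤ Real.log R := by
          rw [← Real.log_exp ((C1 - u z₁)/ε)]
          exact Real.log_le_log (Real.exp_pos _) (le_max_right _ _)
        have h2 := mul_le_mul_of_nonneg_left h1 hε.le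
        have h3 : ε * ((C1 - u z₁)/ε) = C1 - u z₁ := by field_simp
        linarith
      apply annulus_bound hvf one_pos ?_ ?_ hz1.le hRz
      · intro w hw
        have h1 : u w ≤ u z₁ := hz₁max ((habs1 w).mpr hw)
        rw [hw]
        simp [Real.log_one]
        linarith
      · intro w hw
        have h1 : u w ≤ C1 := hfar w (by rw [hw]; exact hRR₁)
        rw [hw]
        linarith
    have hlogpos : 0 < Real.log (‖z‖) := Real.log_pos hz1
    by_contra hcon
    push_neg at hcon
    set L : ℝ := Real.log (‖z‖) with hL
    set ε : ℝ := (u z - u z₁) / (2 * L) with hε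
    have hεpos : 0 < ε := div_pos (by linarith) (by linarith)
    have hkey := key ε hεpos
    have hLne : L ≠ 0 := ne_of_gt hlogpos
    have heq : (-ε) * L = -(u z - u z₁)/2 := by
      rw [hε]
      field_simp
    linarith
  -- global bound and conclusion
  have hbound : ∀ z : ℂ, z ≠ 0 → u z ≤ u z₁ := by
    intro z hz
    rcases lt_trichotomy (‖z‖) 1 with hc | hc | hc
    · exact hinnerb z hz hc
    · exact hz₁max ((habs1 z).mpr hc)
    · exact houterb z hz hc
  refine ⟨u z₁, fun z hz => ?_⟩
  apply hasHoloField_const_of_isLocalMax hf hz₁0 ?_ z hz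
  filter_upwards [hop.eventually_mem hz₁0] with w hw
  exact hbound w hw
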